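/- lim_{w→1+} Ψ_b(w) = 1, where Ψ_b(w) := b·w^b·(Q_{b−1}(w) − Q_b(w)). -/

import Mathlib

/-- Legendre function of the second kind, via its convergent series for `w > 1`. -/
noncomputable def Qleg (ν : ℝ) (w : ℝ) : ℝ :=
  (1/2) * ∑' m : ℕ, Real.Gamma ((ν+1)/2 + m) * Real.Gamma ((ν+2)/2 + m) /
    (Real.Gamma (ν + 3/2 + m) * Nat.factorial m) * w ^ (-(2 * (m : ℝ) + ν + 1))

open Filter Topology Real Finset Nat

namespace Stmt11Aux

lemma Gamma_congr {x y : ℝ} (h : x = y) : Real.Gamma x = Real.Gamma y := by rw [h]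

noncomputable def P (s : ℝ) (n : ℕ) : ℝ := ∏ j ∈ Finset.range (n+1), (s + j)

lemma Gamma_P (s : ℝ) (hs : ∀ j : ℕ, s + j ≠ 0) (n : ℕ) :
    Real.Gamma (s + n + 1) = Real.Gamma s * P s n := by
  induction n with
  | zero =>
      have h0 := hs 0
      simp only [Nat.cast_zero, add_zero] at h0 ⊢
      rw [Real.Gamma_add_one h0]
      simp [P, mul_comm]
  | succ n ih =>
      have hn1 := hs (n+1)
      push_cast at hn1 ⊢
      have : s + (n + 1) + 1 = (s + n + 1) + 1 := by ring
      rw [this, Real.Gamma_add_one (by push_cast; intro h; exact hn1 (by linarith)), ih]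
      simp only [P, Finset.prod_range_succ]
      push_cast
      ring

lemma P_ne_zero {s : ℝ} (hs : ∀ j : ℕ, s + j ≠ 0) (n : ℕ) : P s n ≠ 0 :=
  Finset.prod_ne_zero_iff.mpr fun j _ => hs j

lemma Gamma_ne_zero' {s : ℝ} (hs : ∀ j : ℕ, s + j ≠ 0) : Real.Gamma s ≠ 0 := by
  refine Real.Gamma_ne_zero fun m => ?_
  intro h
  exact hs m (by rw [h]; ring)

/-- Key limit: `Γ(p+n+1)Γ(q+n+1)/(Γ(p+q+n+1) n!) → 1`. -/
lemma tendsto_GG (p q : ℝ) (hp : ∀ j : ℕ, p + j ≠ 0) (hq : ∀ j : ℕ, q + j ≠ 0)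
    (hpq : ∀ j : ℕ, p + q + j ≠ 0) :
    Tendsto (fun n : ℕ => Real.Gamma (p + n + 1) * Real.Gamma (q + n + 1) /
      (Real.Gamma (p + q + n + 1) * n !)) atTop (𝓝 1) := by
  have hΓp := Gamma_ne_zero' hp
  have hΓq := Gamma_ne_zero' hq
  have hΓpq := Gamma_ne_zero' hpq
  have key : Tendsto (fun n : ℕ => (Real.Gamma p * Real.Gamma q / Real.Gamma (p+q)) *
      (Real.GammaSeq (p+q) n / (Real.GammaSeq p n * Real.GammaSeq q n))) atTop
      (𝓝 ((Real.Gamma p * Real.Gamma q / Real.Gamma (p+q)) *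
        (Real.Gamma (p+q) / (Real.Gamma p * Real.Gamma q)))) := by
    exact Tendsto.const_mul _ ((Real.GammaSeq_tendsto_Gamma (p+q)).div
      ((Real.GammaSeq_tendsto_Gamma p).mul (Real.GammaSeq_tendsto_Gamma q))
      (mul_ne_zero hΓp hΓq))
  have hval : (Real.Gamma p * Real.Gamma q / Real.Gamma (p+q)) *
      (Real.Gamma (p+q) / (Real.Gamma p * Real.Gamma q)) = 1 := by
    field_simp
  rw [hval] at key
  refine key.congr' ?_
  filter_upwards [eventually_ge_atTop 1] with n hn
  have hn0 : (0:ℝ) < (n:ℝ) := by exact_mod_cast hn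
  have hfac : ((n ! : ℕ) : ℝ) ≠ 0 := by exact_mod_cast (Nat.factorial_ne_zero n)
  have hPp := P_ne_zero hp n
  have hPq := P_ne_zero hq n
  have hPpq := P_ne_zero hpq n
  have hrp : (0:ℝ) < (n:ℝ) ^ p := Real.rpow_pos_of_pos hn0 p
  have hrq : (0:ℝ) < (n:ℝ) ^ q := Real.rpow_pos_of_pos hn0 q
  have hadd : (n:ℝ) ^ (p+q) = (n:ℝ) ^ p * (n:ℝ) ^ q := Real.rpow_add hn0 p q
  rw [Real.GammaSeq, Real.GammaSeq, Real.GammaSeq,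
    Gamma_P p hp n, Gamma_P q hq n, Gamma_P (p+q) hpq n]
  show (Real.Gamma p * Real.Gamma q / Real.Gamma (p+q)) *
      ((n:ℝ) ^ (p+q) * n ! / P (p+q) n / ((n:ℝ) ^ p * n ! / P p n * ((n:ℝ) ^ q * n ! / P q n)))
      = Real.Gamma p * P p n * (Real.Gamma q * P q n) / (Real.Gamma (p+q) * P (p+q) n * n !)
  rw [hadd]
  field_simp


noncomputable def Ac (b : ℝ) (m : ℕ) : ℝ :=
  Real.Gamma (b/2 + m) * Real.Gamma ((b+1)/2 + m) / (Real.Gamma (b + 1/2 + m) * m !)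

noncomputable def Cc (b : ℝ) (m : ℕ) : ℝ :=
  Real.Gamma ((b+1)/2 + m) * Real.Gamma ((b+2)/2 + m) / (Real.Gamma (b + 3/2 + m) * m !)

noncomputable def Dc (b : ℝ) (m : ℕ) : ℝ := Ac b m - Cc b m

noncomputable def V (b : ℝ) (n : ℕ) : ℝ :=
  Real.Gamma (b/2 + n + 1) * Real.Gamma ((b+1)/2 + n + 1) /
    (Real.Gamma (b + 1/2 + n + 1) * n !)

section

variable {b : ℝ} (hb : -1/2 < b) (hb0 : b ≠ 0)
include hb hb0

lemma half_ne (m : ℕ) : b/2 + (m:ℝ) ≠ 0 := by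
  rcases m with _ | m
  · simpa using fun h => hb0 (by linarith)
  · have : (0:ℝ) ≤ m := Nat.cast_nonneg m
    push_cast
    intro h; linarith

lemma Dc_eq (m : ℕ) : Dc b m =
    (b+1)/2 * (Real.Gamma (b/2 + m) * Real.Gamma ((b+1)/2 + m) /
      (Real.Gamma (b + 3/2 + m) * m !)) := by
  have hm : (0:ℝ) ≤ m := Nat.cast_nonneg m
  have h1 : Real.Gamma (b + 3/2 + m) = (b + 1/2 + m) * Real.Gamma (b + 1/2 + m) := by
    rw [show b + 3/2 + (m:ℝ) = (b + 1/2 + m) + 1 by ring, Real.Gamma_add_one (by intro h; linarith)]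
  have h2 : Real.Gamma ((b+2)/2 + m) = (b/2 + m) * Real.Gamma (b/2 + m) := by
    rw [show (b+2)/2 + (m:ℝ) = (b/2 + m) + 1 by ring, Real.Gamma_add_one (half_ne hb hb0 m)]
  have hΓ : Real.Gamma (b + 1/2 + m) ≠ 0 :=
    (Real.Gamma_pos_of_pos (by linarith)).ne'
  have hfac : ((m ! : ℕ) : ℝ) ≠ 0 := by exact_mod_cast m.factorial_ne_zero
  have hne : b + 1/2 + (m:ℝ) ≠ 0 := by intro h; linarith
  rw [Dc, Ac, Cc, h1, h2,
    div_sub_div _ _ (mul_ne_zero hΓ hfac) (mul_ne_zero (mul_ne_zero hne hΓ) hfac),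
    ← mul_div_assoc,
    div_eq_div_iff (mul_ne_zero (mul_ne_zero hΓ hfac) (mul_ne_zero (mul_ne_zero hne hΓ) hfac))
      (mul_ne_zero (mul_ne_zero hne hΓ) hfac)]
  ring

lemma bsum_Dc (N : ℕ) : b * ∑ m ∈ Finset.range (N+1), Dc b m = 2 * V b N := by
  induction N with
  | zero =>
      rw [Finset.sum_range_one, Dc_eq hb hb0, V]
      have e1 : b/2 + ((0:ℕ):ℝ) + 1 = (b/2) + 1 := by push_cast; ring
      have e2 : (b+1)/2 + ((0:ℕ):ℝ) + 1 = ((b+1)/2) + 1 := by push_cast; ring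
      have e3 : Real.Gamma (b + 1/2 + ((0:ℕ):ℝ) + 1) = Real.Gamma (b + 3/2 + ((0:ℕ):ℝ)) := by
        apply Gamma_congr; push_cast; ring
      rw [e1, e2, e3, Real.Gamma_add_one (by simpa using half_ne hb hb0 0),
        Real.Gamma_add_one (by intro h; linarith : (b+1)/2 ≠ 0)]
      have hΓ : Real.Gamma (b + 3/2 + ((0:ℕ):ℝ)) ≠ 0 :=
        (Real.Gamma_pos_of_pos (by push_cast; linarith)).ne'
      have hfac : (((0:ℕ) ! : ℕ) : ℝ) ≠ 0 := by norm_num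
      field_simp
      ring
  | succ N ih =>
      rw [Finset.sum_range_succ, mul_add, ih, Dc_eq hb hb0]
      have hN : (0:ℝ) ≤ N := Nat.cast_nonneg N
      have e1 : Real.Gamma (b/2 + ((N+1:ℕ):ℝ) + 1) = (b/2 + N + 1) * Real.Gamma (b/2 + N + 1) := by
        rw [show b/2 + ((N+1:ℕ):ℝ) + 1 = (b/2 + N + 1) + 1 by push_cast; ring,
          Real.Gamma_add_one (by intro h; linarith)]
      have e2 : Real.Gamma ((b+1)/2 + ((N+1:ℕ):ℝ) + 1)
          = ((b+1)/2 + N + 1) * Real.Gamma ((b+1)/2 + N + 1) := by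
        rw [show (b+1)/2 + ((N+1:ℕ):ℝ) + 1 = ((b+1)/2 + N + 1) + 1 by push_cast; ring,
          Real.Gamma_add_one (by intro h; linarith)]
      have e3 : Real.Gamma (b + 1/2 + ((N+1:ℕ):ℝ) + 1)
          = (b + 1/2 + N + 1) * Real.Gamma (b + 1/2 + N + 1) := by
        rw [show b + 1/2 + ((N+1:ℕ):ℝ) + 1 = (b + 1/2 + N + 1) + 1 by push_cast; ring,
          Real.Gamma_add_one (by intro h; linarith)]
      have e4 : Real.Gamma (b + 3/2 + ((N+1:ℕ):ℝ))
          = (b + 1/2 + N + 1) * Real.Gamma (b + 1/2 + N + 1) := by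
        rw [show b + 3/2 + ((N+1:ℕ):ℝ) = (b + 1/2 + N + 1) + 1 by push_cast; ring,
          Real.Gamma_add_one (by intro h; linarith)]
      have e5 : Real.Gamma (b/2 + ((N+1:ℕ):ℝ)) = Real.Gamma (b/2 + N + 1) := by
        apply Gamma_congr; push_cast; ring
      have e6 : Real.Gamma ((b+1)/2 + ((N+1:ℕ):ℝ)) = Real.Gamma ((b+1)/2 + N + 1) := by
        apply Gamma_congr; push_cast; ring
      have e7 : (((N+1:ℕ)! : ℕ) : ℝ) = (N+1) * ((N ! : ℕ) : ℝ) := by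
        rw [Nat.factorial_succ]; push_cast; ring
      rw [V, V, e1, e2, e3, e4, e5, e6, e7]
      have hΓ3 : Real.Gamma (b + 1/2 + N + 1) ≠ 0 :=
        (Real.Gamma_pos_of_pos (by linarith)).ne'
      have hfac : ((N ! : ℕ) : ℝ) ≠ 0 := by exact_mod_cast N.factorial_ne_zero
      have h1 : b + 1/2 + (N:ℝ) + 1 ≠ 0 := by intro h; linarith
      have h2 : (N:ℝ) + 1 ≠ 0 := by intro h; linarith
      have hden1 : Real.Gamma (b + 1/2 + (N:ℝ) + 1) * ((N ! : ℕ) : ℝ) ≠ 0 := mul_ne_zero hΓ3 hfac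
      have hden2 : (b + 1/2 + (N:ℝ) + 1) * Real.Gamma (b + 1/2 + (N:ℝ) + 1) * (((N:ℝ) + 1) * ((N ! : ℕ) : ℝ)) ≠ 0 :=
        mul_ne_zero (mul_ne_zero h1 hΓ3) (mul_ne_zero h2 hfac)
      simp only [← mul_div_assoc]
      rw [div_add_div _ _ hden1 hden2, div_eq_div_iff (mul_ne_zero hden1 hden2) hden2]
      ring

lemma sum_Dc (N : ℕ) : ∑ m ∈ Finset.range (N+1), Dc b m = 2/b * V b N := by
  have h := bsum_Dc hb hb0 N
  field_simp
  linear_combination h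



lemma Cc_pos (m : ℕ) : 0 < Cc b m := by
  have hm : (0:ℝ) ≤ m := Nat.cast_nonneg m
  have h1 : (0:ℝ) < Real.Gamma ((b+1)/2 + m) := Real.Gamma_pos_of_pos (by linarith)
  have h2 : (0:ℝ) < Real.Gamma ((b+2)/2 + m) := Real.Gamma_pos_of_pos (by linarith)
  have h3 : (0:ℝ) < Real.Gamma (b + 3/2 + m) := Real.Gamma_pos_of_pos (by linarith)
  have h4 : (0:ℝ) < ((m ! : ℕ) : ℝ) := by exact_mod_cast m.factorial_pos
  exact div_pos (mul_pos h1 h2) (mul_pos h3 h4)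


lemma Dc_nonneg (m : ℕ) : 0 ≤ Dc b (m+1) := by
  rw [Dc_eq hb hb0]
  have hm : (0:ℝ) ≤ m := Nat.cast_nonneg m
  have hc : ((m+1:ℕ):ℝ) = (m:ℝ) + 1 := by push_cast; ring
  rw [hc]
  have h1 : (0:ℝ) < Real.Gamma (b/2 + ((m:ℝ)+1)) := Real.Gamma_pos_of_pos (by linarith)
  have h2 : (0:ℝ) < Real.Gamma ((b+1)/2 + ((m:ℝ)+1)) := Real.Gamma_pos_of_pos (by linarith)
  have h3 : (0:ℝ) < Real.Gamma (b + 3/2 + ((m:ℝ)+1)) := Real.Gamma_pos_of_pos (by linarith)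
  have h4 : (0:ℝ) < (((m+1)! : ℕ) : ℝ) := by exact_mod_cast (m+1).factorial_pos
  have hb1 : (0:ℝ) ≤ (b+1)/2 := by linarith
  exact mul_nonneg hb1 (div_pos (mul_pos h1 h2) (mul_pos h3 h4)).le

lemma V_tendsto : Tendsto (V b) atTop (𝓝 1) := by
  have hq : ∀ j : ℕ, (b+1)/2 + (j:ℝ) ≠ 0 := fun j =>
    (by have := Nat.cast_nonneg (α := ℝ) j; linarith : (0:ℝ) < (b+1)/2 + j).ne'
  have hpq : ∀ j : ℕ, b/2 + (b+1)/2 + (j:ℝ) ≠ 0 := fun j =>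
    (by have := Nat.cast_nonneg (α := ℝ) j; linarith : (0:ℝ) < b/2 + (b+1)/2 + j).ne'
  refine (tendsto_GG (b/2) ((b+1)/2) (half_ne hb hb0) hq hpq).congr fun n => ?_
  rw [V, show b/2 + (b+1)/2 + (n:ℝ) + 1 = b + 1/2 + n + 1 by ring]

lemma partial_tendsto : Tendsto (fun N => ∑ m ∈ Finset.range N, Dc b m) atTop (𝓝 (2/b)) := by
  rw [← tendsto_add_atTop_iff_nat 1]
  have h : Tendsto (fun N => 2/b * V b N) atTop (𝓝 (2/b)) := by
    simpa using (V_tendsto hb hb0).const_mul (2/b)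
  exact h.congr fun N => (sum_Dc hb hb0 N).symm

lemma Dc_summable : Summable (Dc b) := by
  obtain ⟨K, hK⟩ := ((V_tendsto hb hb0).const_mul (2/b)).bddAbove_range
  rw [mem_upperBounds] at hK
  have hle : ∀ N, ∑ m ∈ Finset.range N, Dc b (m+1) ≤ K - Dc b 0 := by
    intro N
    have h1 : ∑ m ∈ Finset.range (N+1), Dc b m
        = (∑ m ∈ Finset.range N, Dc b (m+1)) + Dc b 0 := Finset.sum_range_succ' _ _
    have h2 := sum_Dc hb hb0 N
    have h3 : 2/b * V b N ≤ K := hK _ ⟨N, rfl⟩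
    linarith
  exact (summable_nat_add_iff 1).mp
    (summable_of_sum_range_le (fun m => Dc_nonneg hb hb0 m) hle)

lemma Dc_tsum : ∑' m, Dc b m = 2/b :=
  tendsto_nhds_unique ((Dc_summable hb hb0).hasSum.tendsto_sum_nat) (partial_tendsto hb hb0)

lemma Cc_tendsto : Tendsto (Cc b) atTop (𝓝 0) := by
  rw [← tendsto_add_atTop_iff_nat 1]
  have hp : ∀ j : ℕ, (b+1)/2 + (j:ℝ) ≠ 0 := fun j =>
    (by have := Nat.cast_nonneg (α := ℝ) j; linarith : (0:ℝ) < (b+1)/2 + j).ne'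
  have hq : ∀ j : ℕ, (b+2)/2 + (j:ℝ) ≠ 0 := fun j =>
    (by have := Nat.cast_nonneg (α := ℝ) j; linarith : (0:ℝ) < (b+2)/2 + j).ne'
  have hpq : ∀ j : ℕ, (b+1)/2 + (b+2)/2 + (j:ℝ) ≠ 0 := fun j =>
    (by have := Nat.cast_nonneg (α := ℝ) j; linarith : (0:ℝ) < (b+1)/2 + (b+2)/2 + j).ne'
  have h0 : Tendsto (fun n : ℕ => (1:ℝ)/(n+1)) atTop (𝓝 0) :=
    tendsto_one_div_add_atTop_nhds_zero_nat
  have h := (tendsto_GG ((b+1)/2) ((b+2)/2) hp hq hpq).mul h0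
  rw [one_mul] at h
  refine h.congr fun n => ?_
  have hn : (0:ℝ) ≤ n := Nat.cast_nonneg n
  rw [Cc]
  have e1 : Real.Gamma ((b+1)/2 + ((n+1:ℕ):ℝ)) = Real.Gamma ((b+1)/2 + n + 1) := by
    apply Gamma_congr; push_cast; ring
  have e2 : Real.Gamma ((b+2)/2 + ((n+1:ℕ):ℝ)) = Real.Gamma ((b+2)/2 + n + 1) := by
    apply Gamma_congr; push_cast; ring
  have e3 : Real.Gamma (b + 3/2 + ((n+1:ℕ):ℝ)) = Real.Gamma ((b+1)/2 + (b+2)/2 + n + 1) := by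
    apply Gamma_congr; push_cast; ring
  have e7 : (((n+1:ℕ)! : ℕ) : ℝ) = (n+1) * ((n ! : ℕ) : ℝ) := by
    rw [Nat.factorial_succ]; push_cast; ring
  rw [e1, e2, e3, e7]
  have hΓ : Real.Gamma ((b+1)/2 + (b+2)/2 + (n:ℝ) + 1) ≠ 0 :=
    (Real.Gamma_pos_of_pos (by linarith)).ne'
  have hfac : ((n ! : ℕ) : ℝ) ≠ 0 := by exact_mod_cast n.factorial_ne_zero
  have hn1 : (n:ℝ) + 1 ≠ 0 := by intro h'; linarith
  field_simp



end

set_option maxHeartbeats 1000000 in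
lemma abel0 {c : ℕ → ℝ} (h0 : ∀ m, 0 ≤ c m) (hc : Tendsto c atTop (𝓝 0)) :
    Tendsto (fun y : ℝ => (1 - y) * ∑' m, c m * y^m) (𝓝[Set.Ioo (0:ℝ) 1] 1) (𝓝 0) := by
  obtain ⟨B, hB⟩ := hc.bddAbove_range
  rw [mem_upperBounds] at hB
  have hBc : ∀ m, c m ≤ B := fun m => hB _ ⟨m, rfl⟩
  rw [Metric.tendsto_nhdsWithin_nhds]
  intro ε hε
  have h4 : (0:ℝ) < ε/4 := by linarith
  obtain ⟨M, hM⟩ := (eventually_atTop).mp (hc.eventually (eventually_lt_nhds h4))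
  set S := ∑ m ∈ Finset.range M, c m with hSdef
  have hS0 : 0 ≤ S := Finset.sum_nonneg fun m _ => h0 m
  refine ⟨min 1 (ε/(4*(S+1))), by positivity, ?_⟩
  intro y hy hyd
  obtain ⟨hy0, hy1⟩ := hy
  have hy0' : (0:ℝ) ≤ y := hy0.le
  have h1y : 0 < 1 - y := by linarith
  have hgeo : Summable (fun m : ℕ => y^m) := summable_geometric_of_lt_one hy0' hy1
  have hsum : Summable (fun m => c m * y^m) := by
    refine Summable.of_nonneg_of_le (fun m => mul_nonneg (h0 m) (pow_nonneg hy0' m))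
      (fun m => mul_le_mul_of_nonneg_right (hBc m) (pow_nonneg hy0' m)) (hgeo.mul_left B)
  have hsum2 : Summable (fun m => c (m+M) * y^(m+M)) := by
    exact (summable_nat_add_iff M).mpr hsum
  have split := Summable.sum_add_tsum_nat_add (f := fun m => c m * y^m) M hsum
  have htsum0 : 0 ≤ ∑' m, c m * y^m :=
    tsum_nonneg fun m => mul_nonneg (h0 m) (pow_nonneg hy0' m)
  have hterm1 : ∑ m ∈ Finset.range M, c m * y^m ≤ S := by
    refine Finset.sum_le_sum fun m _ => ?_
    have := pow_le_one₀ hy0' hy1.le (n := m)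
    nlinarith [h0 m]
  have hterm2 : ∑' m, c (m+M) * y^(m+M) ≤ (ε/4) * (1-y)⁻¹ := by
    have hle : ∀ m : ℕ, c (m+M) * y^(m+M) ≤ (ε/4) * y^m := by
      intro m
      have h1 : c (m+M) ≤ ε/4 := (hM (m+M) (Nat.le_add_left M m)).le
      have h2 : y^(m+M) ≤ y^m := pow_le_pow_of_le_one hy0' hy1.le (Nat.le_add_right m M)
      exact mul_le_mul h1 h2 (pow_nonneg hy0' _) h4.le
    calc ∑' m, c (m+M) * y^(m+M) ≤ ∑' m : ℕ, (ε/4) * y^m :=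
          Summable.tsum_le_tsum hle hsum2 (hgeo.mul_left _)
      _ = (ε/4) * (1-y)⁻¹ := by rw [tsum_mul_left, tsum_geometric_of_lt_one hy0' hy1]
  have hδ1 : 1 - y < min 1 (ε/(4*(S+1))) := by
    rw [Real.dist_eq, abs_sub_comm, abs_of_pos h1y] at hyd
    exact hyd
  have hδ : 1 - y < ε/(4*(S+1)) := lt_of_lt_of_le hδ1 (min_le_right _ _)
  rw [Real.dist_eq, sub_zero, abs_of_nonneg (mul_nonneg h1y.le htsum0)]
  rw [← split]
  have hinv : (1-y) * ((ε/4) * (1-y)⁻¹) = ε/4 := by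
    field_simp
  calc (1-y) * (∑ m ∈ Finset.range M, c m * y^m + ∑' m, c (m+M) * y^(m+M))
      ≤ (1-y) * (S + (ε/4) * (1-y)⁻¹) := by
        apply mul_le_mul_of_nonneg_left _ h1y.le
        exact add_le_add hterm1 hterm2
    _ = (1-y) * S + ε/4 := by rw [mul_add, hinv]
    _ < ε := by
        have ht : 0 < ε/(4*(S+1)) := lt_trans h1y hδ
        have hq : ε/(4*(S+1)) * (4*(S+1)) = ε := by field_simp
        nlinarith [mul_le_mul_of_nonneg_right hδ.le hS0, hS0, ht, h1y]

section
variable {b : ℝ} (hb : -1/2 < b) (hb0 : b ≠ 0)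
include hb hb0

lemma perw {KC : ℝ} (hKC : ∀ m, Cc b m ≤ KC) {w : ℝ} (hw : 1 < w) :
    b * w ^ b * (Qleg (b-1) w - Qleg b w) =
      (b/2) * (∑' m, Dc b m * (w ^ (-2:ℝ))^m) +
        (b/2) * ((1 - w⁻¹) * ∑' m, Cc b m * (w ^ (-2:ℝ))^m) := by
  have hw0 : (0:ℝ) < w := by linarith
  set X := w ^ (-2:ℝ) with hXdef
  have hX0 : 0 < X := Real.rpow_pos_of_pos hw0 _
  have hX1 : X < 1 := Real.rpow_lt_one_of_one_lt_of_neg hw (by norm_num)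
  have hmain : w ^ b * w ^ (-b) = 1 := by
    rw [← Real.rpow_add hw0]; simp
  have hXm : ∀ m : ℕ, w ^ ((-2:ℝ) * m) = X ^ m := by
    intro m
    rw [Real.rpow_mul hw0.le, Real.rpow_natCast]
  -- q1
  have q1 : w ^ b * Qleg (b-1) w = 1/2 * ∑' m, Ac b m * X ^ m := by
    rw [Qleg, ← mul_assoc, mul_comm (w ^ b) (1/2:ℝ), mul_assoc, ← tsum_mul_left]
    congr 1
    refine tsum_congr fun m => ?_
    have e1 : Real.Gamma ((b-1+1)/2 + m) = Real.Gamma (b/2 + m) := by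
      apply Gamma_congr; ring
    have e2 : Real.Gamma ((b-1+2)/2 + m) = Real.Gamma ((b+1)/2 + m) := by
      apply Gamma_congr; ring
    have e3 : Real.Gamma (b - 1 + 3/2 + m) = Real.Gamma (b + 1/2 + m) := by
      apply Gamma_congr; ring
    have e4 : w ^ (-(2 * (m:ℝ) + (b-1) + 1)) = w ^ (-b) * X ^ m := by
      rw [show -(2 * (m:ℝ) + (b-1) + 1) = (-b) + (-2) * m by ring,
        Real.rpow_add hw0, hXm m]
    rw [e1, e2, e3, e4, Ac]
    set C := Real.Gamma (b/2 + m) * Real.Gamma ((b+1)/2 + m) /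
      (Real.Gamma (b + 1/2 + m) * (m ! : ℕ)) with hC
    linear_combination (C * X ^ m) * hmain
  -- q2
  have q2 : w ^ b * Qleg b w = 1/2 * (w⁻¹ * ∑' m, Cc b m * X ^ m) := by
    rw [Qleg, ← mul_assoc, mul_comm (w ^ b) (1/2:ℝ), mul_assoc, ← tsum_mul_left]
    congr 1
    rw [← tsum_mul_left]
    refine tsum_congr fun m => ?_
    have e4 : w ^ (-(2 * (m:ℝ) + b + 1)) = w ^ (-b) * (w⁻¹ * X ^ m) := by
      rw [show -(2 * (m:ℝ) + b + 1) = (-b) + ((-1) + (-2) * m) by ring,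
        Real.rpow_add hw0, Real.rpow_add hw0, hXm m, Real.rpow_neg_one]
    rw [e4, Cc]
    set C := Real.Gamma ((b+1)/2 + m) * Real.Gamma ((b+2)/2 + m) /
      (Real.Gamma (b + 3/2 + m) * (m ! : ℕ)) with hC
    linear_combination (C * (w⁻¹ * X ^ m)) * hmain
  -- split
  have hsC : Summable (fun m => Cc b m * X ^ m) := by
    refine Summable.of_nonneg_of_le
      (fun m => mul_nonneg (Cc_pos hb hb0 m).le (pow_nonneg hX0.le m))
      (fun m => mul_le_mul_of_nonneg_right (hKC m) (pow_nonneg hX0.le m))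
      ((summable_geometric_of_lt_one hX0.le hX1).mul_left KC)
  have hsD : Summable (fun m => Dc b m * X ^ m) := by
    refine Summable.of_norm_bounded (g := fun m => |Dc b m|) (Dc_summable hb hb0).abs ?_
    intro m
    rw [norm_mul, norm_pow]
    calc ‖Dc b m‖ * ‖X‖ ^ m ≤ ‖Dc b m‖ * 1 := by
          refine mul_le_mul_of_nonneg_left ?_ (norm_nonneg _)
          exact pow_le_one₀ (norm_nonneg X) (by rw [Real.norm_eq_abs, abs_of_pos hX0]; exact hX1.le)
      _ = |Dc b m| := by rw [mul_one, Real.norm_eq_abs]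
  have split : ∑' m, Ac b m * X ^ m
      = (∑' m, Dc b m * X ^ m) + ∑' m, Cc b m * X ^ m := by
    rw [← Summable.tsum_add hsD hsC]
    refine tsum_congr fun m => ?_
    rw [Dc]
    ring
  linear_combination b * q1 - b * q2 + (b/2) * split


end

end Stmt11Aux

open Stmt11Aux

theorem stmt11 (b : ℝ) (hb : -1/2 < b) (hb0 : b ≠ 0) :
    Filter.Tendsto (fun w : ℝ => b * w ^ b * (Qleg (b - 1) w - Qleg b w))
      (nhdsWithin 1 (Set.Ioi 1)) (nhds 1) := by
  obtain ⟨KC, hKC0⟩ := (Cc_tendsto hb hb0).bddAbove_range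
  rw [mem_upperBounds] at hKC0
  have hKC : ∀ m, Cc b m ≤ KC := fun m => hKC0 _ ⟨m, rfl⟩
  -- the map w ↦ w^(-2)
  have ht0 : Tendsto (fun w : ℝ => w ^ (-2:ℝ)) (𝓝 1) (𝓝 1) := by
    have h := (Real.continuousAt_rpow_const 1 (-2) (Or.inl one_ne_zero))
    simpa [Real.one_rpow] using h.tendsto
  have ht : Tendsto (fun w : ℝ => w ^ (-2:ℝ)) (𝓝[Set.Ioi (1:ℝ)] 1) (𝓝 1) :=
    ht0.mono_left nhdsWithin_le_nhds
  have hmem : ∀ᶠ w in 𝓝[Set.Ioi (1:ℝ)] 1, w ^ (-2:ℝ) ∈ Set.Ioo (0:ℝ) 1 := by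
    filter_upwards [self_mem_nhdsWithin] with w hw
    have hw1 : (1:ℝ) < w := hw
    exact ⟨Real.rpow_pos_of_pos (by linarith) _,
      Real.rpow_lt_one_of_one_lt_of_neg hw1 (by norm_num)⟩
  -- Part A
  have hA : Tendsto (fun w : ℝ => (b/2) * ∑' m, Dc b m * (w ^ (-2:ℝ))^m)
      (𝓝[Set.Ioi (1:ℝ)] 1) (𝓝 1) := by
    have htan : Tendsto (fun w : ℝ => ∑' m, Dc b m * (w ^ (-2:ℝ))^m)
        (𝓝[Set.Ioi (1:ℝ)] 1) (𝓝 (∑' m, Dc b m)) := by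
      refine tendsto_tsum_of_dominated_convergence (bound := fun m => |Dc b m|)
        (Dc_summable hb hb0).abs (fun m => ?_) ?_
      · have := (ht.pow m).const_mul (Dc b m)
        simpa using this
      · filter_upwards [hmem] with w hw
        intro m
        rw [norm_mul, norm_pow, Real.norm_eq_abs, Real.norm_eq_abs,
          abs_of_pos hw.1]
        calc |Dc b m| * (w ^ (-2:ℝ))^m ≤ |Dc b m| * 1 := by
              refine mul_le_mul_of_nonneg_left ?_ (abs_nonneg _)
              exact pow_le_one₀ hw.1.le hw.2.le
          _ = |Dc b m| := mul_one _
    rw [Dc_tsum hb hb0] at htan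
    have := htan.const_mul (b/2)
    simpa [show (b/2) * (2/b) = 1 by field_simp] using this
  -- Part B
  have hB : Tendsto (fun w : ℝ =>
      (b/2) * ((1 - w⁻¹) * ∑' m, Cc b m * (w ^ (-2:ℝ))^m))
      (𝓝[Set.Ioi (1:ℝ)] 1) (𝓝 0) := by
    have hmap : Tendsto (fun w : ℝ => w ^ (-2:ℝ)) (𝓝[Set.Ioi (1:ℝ)] 1)
        (𝓝[Set.Ioo (0:ℝ) 1] 1) := by
      rw [tendsto_nhdsWithin_iff]
      exact ⟨ht, hmem⟩
    have houter : Tendsto (fun w : ℝ =>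
        (1 - w ^ (-2:ℝ)) * ∑' m, Cc b m * (w ^ (-2:ℝ))^m)
        (𝓝[Set.Ioi (1:ℝ)] 1) (𝓝 0) :=
      (abel0 (fun m => (Cc_pos hb hb0 m).le) (Cc_tendsto hb hb0)).comp hmap
    have hinner : Tendsto (fun w : ℝ =>
        (1 - w⁻¹) * ∑' m, Cc b m * (w ^ (-2:ℝ))^m) (𝓝[Set.Ioi (1:ℝ)] 1) (𝓝 0) := by
      refine tendsto_of_tendsto_of_tendsto_of_le_of_le' tendsto_const_nhds houter ?_ ?_
      · filter_upwards [self_mem_nhdsWithin] with w hw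
        have hw1 : (1:ℝ) < w := hw
        have h1 : (0:ℝ) < w := by linarith
        have h2 : w⁻¹ < 1 := by
          rw [inv_lt_one_iff₀]; right; exact hw1
        have hts : 0 ≤ ∑' m, Cc b m * (w ^ (-2:ℝ))^m :=
          tsum_nonneg fun m => mul_nonneg (Cc_pos hb hb0 m).le
            (pow_nonneg (Real.rpow_pos_of_pos h1 _).le m)
        exact mul_nonneg (by linarith) hts
      · filter_upwards [self_mem_nhdsWithin] with w hw
        have hw1 : (1:ℝ) < w := hw
        have h1 : (0:ℝ) < w := by linarith
        have hts : 0 ≤ ∑' m, Cc b m * (w ^ (-2:ℝ))^m :=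
          tsum_nonneg fun m => mul_nonneg (Cc_pos hb hb0 m).le
            (pow_nonneg (Real.rpow_pos_of_pos h1 _).le m)
        refine mul_le_mul_of_nonneg_right ?_ hts
        have hle : w ^ (-2:ℝ) ≤ w ^ (-1:ℝ) :=
          Real.rpow_le_rpow_of_exponent_le hw1.le (by norm_num)
        rw [Real.rpow_neg_one] at hle
        linarith
    have := hinner.const_mul (b/2)
    simpa using this
  have hsum := hA.add hB
  rw [add_zero] at hsum
  refine hsum.congr' ?_
  filter_upwards [self_mem_nhdsWithin] with w hw
  exact (perw hb hb0 hKC hw).symm
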